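/- arXiv:math/0010059 — 3 statements merged into one kernel-verified Lean document; each statement's English description precedes it below -/
import Mathlib

section
/- Let N be a natural number, p, q : Fin N → ℂ, u(x) = ∑_{k=1}^{N} (p_k · exp(i k x) + q_k · exp(−i k x)), and let L be an integer. Then the family indexed by pairs of multi-indices (a, b) : (Fin N → ℕ) × (Fin N → ℕ), whose value is ∏_{k=1}^{N} p_k^{a_k}/(a_k!) · ∏_{k=1}^{N} q_k^{b_k}/(b_k!) if ∑_{k=1}^{N} k·a_k − ∑_{k=1}^{N} k·b_k = L and 0 otherwise, is summable, and its sum equals the L-th Fourier coefficient (1/(2π)) · ∫₀^{2π} exp(u(x)) · exp(−i L x) dx of exp ∘ u. -/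
/-!
Expanding each factor of `exp u(x) = ∏ₖ exp(pₖ e^{ikx}) · ∏ₖ exp(qₖ e^{-ikx})` in its power
series writes `exp u(x)` as an absolutely convergent sum over pairs of multi-indices `(a, b)` of
`p^a/a! · q^b/b! · e^{i(∑ k aₖ - ∑ k bₖ)x}`. The coefficients are summable in norm and the
exponentials have modulus one, so the series may be integrated term by term, and
`∫₀^{2π} e^{imx} dx = 2π·[m = 0]` keeps exactly the terms of frequency `L`.
-/

open Complex

/-- The trigonometric polynomial `u(x) = ∑_{k=1}^{N} (p_k e^{ikx} + q_k e^{-ikx})` with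
coefficients `p q : Fin N → ℂ` (the index `k : Fin N` corresponding to the frequency
`k + 1 ∈ {1, …, N}`). -/
noncomputable def trigPoly (N : ℕ) (p q : Fin N → ℂ) : ℝ → ℂ := fun x =>
  ∑ k : Fin N,
    (p k * Complex.exp (Complex.I * ((k.val : ℂ) + 1) * (x : ℂ)) +
      q k * Complex.exp (-(Complex.I * ((k.val : ℂ) + 1) * (x : ℂ))))

section PiProd

variable {R β : Type*} [NormedCommRing R]

theorem prod_consEquiv_apply {n : ℕ} (f : Fin (n + 1) → β → R) (x : β × (Fin n → β)) :
    ∏ k, f k (Fin.consEquiv (fun _ => β) x k) = f 0 x.1 * ∏ k : Fin n, f k.succ (x.2 k) := by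
  simp [Fin.consEquiv, Fin.prod_univ_succ]

theorem summable_norm_pi_prod {n : ℕ} {f : Fin n → β → R}
    (hf : ∀ k, Summable fun m => ‖f k m‖) :
    Summable fun a : Fin n → β => ‖∏ k, f k (a k)‖ := by
  induction n with
  | zero => exact .of_finite
  | succ n ih =>
    refine (Fin.consEquiv fun _ => β).summable_iff.mp ?_
    simpa only [Function.comp_def, prod_consEquiv_apply] using
      (hf 0).mul_norm (ih fun k => hf k.succ)

variable [CompleteSpace R]

theorem hasSum_pi_prod_of_summable_norm {n : ℕ} {f : Fin n → β → R}
    (hf : ∀ k, Summable fun m => ‖f k m‖) :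
    HasSum (fun a : Fin n → β => ∏ k, f k (a k)) (∏ k, ∑' m, f k m) := by
  induction n with
  | zero => simp
  | succ n ih =>
    have htail := summable_norm_pi_prod fun k => hf k.succ
    rw [Fin.prod_univ_succ]
    refine (Fin.consEquiv fun _ => β).hasSum_iff.mp ?_
    simp only [Function.comp_def, prod_consEquiv_apply]
    have hsum := summable_mul_of_summable_norm (hf 0) htail
    -- `(e :)` elaborates `e` before unifying with the goal; otherwise the unifier times out
    -- matching the ring instance paths through the `Finset.prod`.
    exact ((hf 0).of_norm.hasSum.mul (ih fun k => hf k.succ) hsum :)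

end PiProd

section ExpMonomial

def expMonomial {𝕜 ι : Type*} [Semifield 𝕜] [Fintype ι] (A : ι → 𝕜) (a : ι → ℕ) : 𝕜 :=
  ∏ k, A k ^ a k / (a k).factorial

variable {𝕜 : Type*} [NormedField 𝕜] [NormedAlgebra ℚ 𝕜]

theorem summable_norm_expMonomial {n : ℕ} (A : Fin n → 𝕜) :
    Summable fun a => ‖expMonomial A a‖ :=
  (summable_norm_pi_prod fun k => NormedSpace.norm_expSeries_div_summable (A k) :)

variable [CompleteSpace 𝕜]

theorem hasSum_expMonomial {n : ℕ} (A : Fin n → 𝕜) :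
    HasSum (expMonomial A) (NormedSpace.exp (∑ k, A k)) := by
  have h := hasSum_pi_prod_of_summable_norm fun k => NormedSpace.norm_expSeries_div_summable (A k)
  simp only [fun k => (NormedSpace.expSeries_div_hasSum_exp (A k)).tsum_eq] at h
  rw [NormedSpace.exp_sum]
  exact h

end ExpMonomial

def weightedDegree {N : ℕ} (a : Fin N → ℕ) : ℤ :=
  ∑ k : Fin N, ((k.val : ℤ) + 1) * (a k : ℤ)

theorem expMonomial_mul_exp {N : ℕ} (p : Fin N → ℂ) (w : ℂ) (a : Fin N → ℕ) :
    expMonomial (fun k => p k * exp (w * ((k.val : ℂ) + 1))) a =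
      expMonomial p a * exp (w * weightedDegree a) := by
  simp only [expMonomial, weightedDegree, Int.cast_sum, Int.cast_mul, Int.cast_add,
    Int.cast_natCast, Int.cast_one, Finset.mul_sum, exp_sum, ← Finset.prod_mul_distrib]
  refine Finset.prod_congr rfl fun k _ => ?_
  rw [mul_pow, ← exp_nat_mul]
  ring_nf

theorem hasSum_exp_trigPoly (N : ℕ) (p q : Fin N → ℂ) (x : ℝ) :
    HasSum
      (fun ab : (Fin N → ℕ) × (Fin N → ℕ) => expMonomial p ab.1 * expMonomial q ab.2 *
        exp (I * ((weightedDegree ab.1 - weightedDegree ab.2 : ℤ) : ℂ) * x))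
      (exp (trigPoly N p q x)) := by
  set P := fun k : Fin N => p k * exp (I * x * ((k.val : ℂ) + 1))
  set Q := fun k : Fin N => q k * exp (-(I * x) * ((k.val : ℂ) + 1))
  have hu : trigPoly N p q x = ∑ k, P k + ∑ k, Q k := by
    simp only [trigPoly, P, Q, ← Finset.sum_add_distrib]
    refine Finset.sum_congr rfl fun k _ => ?_
    ring_nf
  have hP := hasSum_expMonomial P
  have hQ := hasSum_expMonomial Q
  rw [← exp_eq_exp_ℂ] at hP hQ
  have hPQ := summable_mul_of_summable_norm (summable_norm_expMonomial P)
    (summable_norm_expMonomial Q)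
  have h := hP.mul hQ hPQ
  rw [hu, exp_add]
  refine h.congr_fun fun ab => ?_
  rw [expMonomial_mul_exp, expMonomial_mul_exp]
  push_cast
  rw [mul_mul_mul_comm, ← exp_add]
  ring_nf

theorem integral_exp_I_int_mul (m : ℤ) :
    ∫ x in (0 : ℝ)..2 * Real.pi, exp (I * m * x) = if m = 0 then 2 * (Real.pi : ℂ) else 0 := by
  split_ifs with hm
  · simp [hm]
  · have hc : I * m ≠ 0 := mul_ne_zero I_ne_zero (Int.cast_ne_zero.mpr hm)
    have hperiod : exp (I * m * ((2 * Real.pi : ℝ) : ℂ)) = 1 := by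
      convert exp_int_mul_two_pi_mul_I m using 2
      push_cast
      ring
    rw [integral_exp_mul_complex hc, hperiod]
    simp

theorem hasSum_intervalIntegral_of_norm_le {ι E : Type*} [Countable ι] [NormedAddCommGroup E]
    [NormedSpace ℝ E] {F : ι → ℝ → E} {f : ℝ → E} {C : ι → ℝ} {a b : ℝ}
    (hF : ∀ i, Continuous (F i)) (hFC : ∀ i x, ‖F i x‖ ≤ C i) (hC : Summable C)
    (hFf : ∀ x, HasSum (fun i => F i x) (f x)) :
    HasSum (fun i => ∫ x in a..b, F i x) (∫ x in a..b, f x) :=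
  intervalIntegral.hasSum_integral_of_dominated_convergence (fun i _ => C i)
    (fun i => (hF i).aestronglyMeasurable) (fun i => .of_forall fun x _ => hFC i x)
    (.of_forall fun _ _ => hC) intervalIntegrable_const (.of_forall fun x _ => hFf x)

/-- The `L`-th Fourier coefficient of `exp(u(x))` is the (convergent) sum over all pairs of
multi-indices `(a, b)` with `∑ k·a_k - ∑ k·b_k = L` of `∏ p_k^{a_k}/a_k! · ∏ q_k^{b_k}/b_k!`. -/
theorem fourierCoeff_exp_trigPoly (N : ℕ) (p q : Fin N → ℂ) (L : ℤ) :
    HasSum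
      (fun ab : (Fin N → ℕ) × (Fin N → ℕ) =>
        if (∑ k : Fin N, ((k.val : ℤ) + 1) * (ab.1 k : ℤ)) -
              (∑ k : Fin N, ((k.val : ℤ) + 1) * (ab.2 k : ℤ)) = L then
          (∏ k : Fin N, p k ^ ab.1 k / (Nat.factorial (ab.1 k) : ℂ)) *
            (∏ k : Fin N, q k ^ ab.2 k / (Nat.factorial (ab.2 k) : ℂ))
        else 0)
      ((1 / (2 * (Real.pi : ℂ))) *
        ∫ x in (0 : ℝ)..(2 * Real.pi),
          Complex.exp (trigPoly N p q x) *
            Complex.exp (-(Complex.I * (L : ℂ) * (x : ℂ)))) := by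
  set c := fun ab : (Fin N → ℕ) × (Fin N → ℕ) => expMonomial p ab.1 * expMonomial q ab.2
  set m := fun ab : (Fin N → ℕ) × (Fin N → ℕ) => weightedDegree ab.1 - weightedDegree ab.2 - L
  have hterms : ∀ x : ℝ, HasSum (fun ab => c ab * exp (I * (m ab : ℂ) * x))
      (exp (trigPoly N p q x) * exp (-(I * L * x))) := fun x => by
    have h := (hasSum_exp_trigPoly N p q x).mul_right (exp (-(I * L * x)))
    refine h.congr_fun fun ab => ?_
    simp only [c, m, mul_assoc, ← exp_add]
    push_cast
    ring_nf
  have hnorm : ∀ ab (x : ℝ), ‖c ab * exp (I * (m ab : ℂ) * x)‖ = ‖c ab‖ := fun ab x => by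
    rw [norm_mul, show I * (m ab : ℂ) * x = ((m ab * x : ℝ) : ℂ) * I by push_cast; ring,
      norm_exp_ofReal_mul_I, mul_one]
  have hc : Summable fun ab => ‖c ab‖ :=
    (summable_norm_expMonomial p).mul_norm (summable_norm_expMonomial q)
  have hint := hasSum_intervalIntegral_of_norm_le (a := 0) (b := 2 * Real.pi)
    (fun ab => by fun_prop) (fun ab x => (hnorm ab x).le) hc hterms
  refine (hint.mul_left (1 / (2 * (Real.pi : ℂ)))).congr_fun fun ab => ?_
  rw [intervalIntegral.integral_const_mul, integral_exp_I_int_mul]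
  simp only [c, m, expMonomial, weightedDegree, sub_eq_zero]
  split_ifs
  · field_simp
  · simp
end

section
/- Let N be a natural number, t₀ ∈ ℂ, let p⁰, q⁰, p², q² : Fin N → ℂ, let u₀(x) = ∑_{k=1}^{N} (p⁰_k · exp(i k x) + q⁰_k · exp(−i k x)) and u₂(x) = ∑_{k=1}^{N} (p²_k · exp(i k x) + q²_k · exp(−i k x)), and let l ≥ 1 be a natural number. Then (1/(2π)) · ∫₀^{2π} [ (t₀ + u₀(x))²/2 + exp(u₂(x)) · exp(−i l x) ] dx = t₀²/2 + ∑_{k=1}^{N} p⁰_k · q⁰_k + ∑_{(a,b)} ∏_{k=1}^{N} (p²_k)^{a_k}/(a_k!) · ∏_{k=1}^{N} (q²_k)^{b_k}/(b_k!), where the last (absolutely convergent) sum runs over all pairs of multi-indices (a, b) : (Fin N → ℕ) × (Fin N → ℕ) with ∑_{k} k·a_k − ∑_{k} k·b_k = l. -/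
/-- The multi-index term `∏ p_k^{a_k}/a_k! · ∏ q_k^{b_k}/b_k!` if `∑ k·a_k - ∑ k·b_k = L`,
and `0` otherwise. -/
noncomputable def multiTerm (N : ℕ) (p q : Fin N → ℂ) (L : ℤ)
    (ab : (Fin N → ℕ) × (Fin N → ℕ)) : ℂ :=
  if (∑ k : Fin N, ((k.val : ℤ) + 1) * (ab.1 k : ℤ)) -
        (∑ k : Fin N, ((k.val : ℤ) + 1) * (ab.2 k : ℤ)) = L then
    (∏ k : Fin N, p k ^ ab.1 k / (Nat.factorial (ab.1 k) : ℂ)) *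
      (∏ k : Fin N, q k ^ ab.2 k / (Nat.factorial (ab.2 k) : ℂ))
  else 0

/-! Write `u(x) = ∑ᵢ cᵢ e^{i mᵢ x}` as a sum of `2N` Fourier modes with nonzero frequencies
`mᵢ = ±k`. Averaging over a period kills every mode `e^{inx}` with `n ≠ 0`, so in `(t₀ + u)²/2`
only `t₀²/2` and the cross terms of frequencies `k` and `-k`, i.e. `p_k q_k`, survive. For the
exponential term, multiplying the power series of the factors `exp (cᵢ e^{i mᵢ x})` gives an
absolutely convergent multi-index series `∑ₐ (∏ᵢ cᵢ^{aᵢ}/aᵢ!) e^{i (∑ᵢ mᵢ aᵢ) x}`, which may be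
integrated term by term; after the twist by `e^{-ilx}` exactly the multi-indices of weight `l`
survive, and splitting `a` into its `p`- and `q`-parts gives the stated sum.
-/

open Complex Finset MeasureTheory

theorem summable_norm_prod_and_tsum_prod_eq_prod_tsum {R κ ι : Type*}
    [NormedCommRing R] [CompleteSpace R] [h : Fintype ι] (f : ι → κ → R)
    (hf : ∀ i, Summable fun n => ‖f i n‖) :
    Summable (fun a : ι → κ => ‖∏ i, f i (a i)‖) ∧
      ∑' a : ι → κ, ∏ i, f i (a i) = ∏ i, ∑' n, f i n := by
  revert f
  refine Fintype.induction_empty_option ?_ ?_ ?_ ι (h_fintype := h)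
  · intro α β _ e ih f hf
    let := Fintype.ofEquiv β e.symm
    obtain ⟨hs, ht⟩ := ih (fun i => f (e i)) fun i => hf (e i)
    let e' : (β → κ) ≃ (α → κ) := (e.arrowCongr (Equiv.refl κ)).symm
    have hprod : ∀ a : β → κ, ∏ i, f i (a i) = ∏ i, f (e i) (e' a i) := fun a =>
      (Fintype.prod_equiv e _ _ fun i => by simp [e']).symm
    have htsum : ∏ i, ∑' n, f i n = ∏ i, ∑' n, f (e i) n :=
      (Fintype.prod_equiv e _ _ fun i => rfl).symm
    refine ⟨?_, ?_⟩
    · rw [← e'.symm.summable_iff]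
      simpa [Function.comp_def, hprod] using hs
    · rw [← e'.symm.tsum_eq, htsum, ← ht]
      simp only [hprod, Equiv.apply_symm_apply]
  · intro f _
    simpa using Summable.of_finite
  · intro α _ ih f hf
    obtain ⟨hs, ht⟩ := ih (fun i => f (some i)) fun i => hf (some i)
    let e := Equiv.piOptionEquivProd (β := fun _ : Option α => κ)
    have hprod : ∀ a : Option α → κ,
        ∏ i, f i (a i) = f none (e a).1 * ∏ i, f (some i) ((e a).2 i) :=
      fun a => Fintype.prod_option _
    refine ⟨?_, ?_⟩
    · rw [← e.symm.summable_iff]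
      simpa [Function.comp_def, hprod] using (hf none).mul_norm hs
    · rw [← e.symm.tsum_eq]
      simp only [hprod, Equiv.apply_symm_apply]
      rw [Fintype.prod_option, ← ht, tsum_mul_tsum_of_summable_norm (hf none) hs]

noncomputable def fourierMode (n : ℤ) (x : ℝ) : ℂ := exp (I * n * x)

theorem fourierMode_zero (x : ℝ) : fourierMode 0 x = 1 := by
  simp [fourierMode]

theorem fourierMode_add (m n : ℤ) (x : ℝ) :
    fourierMode m x * fourierMode n x = fourierMode (m + n) x := by
  rw [fourierMode, fourierMode, fourierMode, ← exp_add]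
  push_cast
  ring_nf

theorem prod_fourierMode {ι : Type*} (s : Finset ι) (m : ι → ℤ) (x : ℝ) :
    ∏ i ∈ s, fourierMode (m i) x = fourierMode (∑ i ∈ s, m i) x := by
  simp only [fourierMode, ← exp_sum]
  push_cast
  rw [Finset.mul_sum, Finset.sum_mul]

theorem fourierMode_pow (m : ℤ) (n : ℕ) (x : ℝ) :
    fourierMode m x ^ n = fourierMode (m * n) x := by
  rw [fourierMode, fourierMode, ← exp_nat_mul]
  push_cast
  ring_nf

theorem norm_fourierMode (n : ℤ) (x : ℝ) : ‖fourierMode n x‖ = 1 := by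
  rw [fourierMode, show I * n * x = ((n * x : ℝ) : ℂ) * I by push_cast; ring]
  exact norm_exp_ofReal_mul_I _

@[fun_prop]
theorem continuous_fourierMode (n : ℤ) : Continuous (fourierMode n) := by
  unfold fourierMode
  fun_prop

theorem integral_fourierMode (n : ℤ) :
    ∫ x in (0 : ℝ)..2 * Real.pi, fourierMode n x = if n = 0 then 2 * (Real.pi : ℂ) else 0 := by
  split_ifs with hn
  · simp [hn, fourierMode_zero]
  · have hc : I * n ≠ 0 := mul_ne_zero I_ne_zero (Int.cast_ne_zero.mpr hn)
    have hperiod : exp (I * n * (2 * Real.pi : ℝ)) = 1 := by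
      rw [← exp_int_mul_two_pi_mul_I n]
      push_cast
      ring_nf
    simp only [fourierMode]
    rw [integral_exp_mul_complex hc, hperiod]
    simp

theorem integral_tsum_mul_fourierMode {ι : Type*} [Countable ι] {c : ι → ℂ}
    (hc : Summable fun i => ‖c i‖) (m : ι → ℤ) :
    ∫ x in (0 : ℝ)..2 * Real.pi, ∑' i, c i * fourierMode (m i) x =
      2 * Real.pi * ∑' i, if m i = 0 then c i else 0 := by
  have hsum := intervalIntegral.hasSum_integral_of_dominated_convergence
    (μ := volume) (a := 0) (b := 2 * Real.pi)
    (F := fun i x => c i * fourierMode (m i) x) (fun i _ => ‖c i‖)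
    (fun i => (continuous_const.mul (continuous_fourierMode _)).aestronglyMeasurable)
    (fun i => ae_of_all _ fun x _ => by rw [norm_mul, norm_fourierMode, mul_one])
    (ae_of_all _ fun _ _ => hc) intervalIntegrable_const
    (ae_of_all _ fun x _ => (hc.of_norm_bounded fun i => by
      rw [norm_mul, norm_fourierMode, mul_one]).hasSum)
  rw [← hsum.tsum_eq, ← tsum_mul_left]
  congr 1
  ext i
  rw [intervalIntegral.integral_const_mul, integral_fourierMode]
  split_ifs <;> ring

theorem integral_sum_mul_fourierMode {ι : Type*} [Fintype ι] (c : ι → ℂ) (m : ι → ℤ) :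
    ∫ x in (0 : ℝ)..2 * Real.pi, ∑ i, c i * fourierMode (m i) x =
      2 * Real.pi * ∑ i, if m i = 0 then c i else 0 := by
  simpa only [tsum_fintype] using
    integral_tsum_mul_fourierMode (Summable.of_finite (f := fun i => ‖c i‖)) m

theorem sq_sum_mul_fourierMode {ι : Type*} [Fintype ι] (c : ι → ℂ) (m : ι → ℤ) (x : ℝ) :
    (∑ i, c i * fourierMode (m i) x) ^ 2 =
      ∑ ij : ι × ι, c ij.1 * c ij.2 * fourierMode (m ij.1 + m ij.2) x := by
  rw [sq, Finset.sum_mul_sum, ← Finset.univ_product_univ, Finset.sum_product]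
  refine Finset.sum_congr rfl fun i _ => Finset.sum_congr rfl fun j _ => ?_
  rw [← fourierMode_add]
  ring

theorem integral_const_add_sum_mul_fourierMode_sq {ι : Type*} [Fintype ι] (t : ℂ) (c : ι → ℂ)
    {m : ι → ℤ} (hm : ∀ i, m i ≠ 0) :
    ∫ x in (0 : ℝ)..2 * Real.pi, (t + ∑ i, c i * fourierMode (m i) x) ^ 2 =
      2 * Real.pi * (t ^ 2 + ∑ i, ∑ j, if m i + m j = 0 then c i * c j else 0) := by
  have hopt : ∀ x, t + ∑ i, c i * fourierMode (m i) x =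
      ∑ o : Option ι, o.elim t c * fourierMode (o.elim 0 m) x := fun x => by
    simp [Fintype.sum_option, fourierMode_zero]
  simp only [hopt, sq_sum_mul_fourierMode]
  rw [integral_sum_mul_fourierMode, Fintype.sum_prod_type]
  congr 1
  simp only [Fintype.sum_option, Option.elim_none, Option.elim_some, add_zero, zero_add, hm,
    if_true, if_false, sum_const_zero, sq]
  -- the two sides differ only in the `Decidable` instances of the conditions
  rfl

noncomputable def expCoeff {ι : Type*} [Fintype ι] (c : ι → ℂ) (a : ι → ℕ) : ℂ :=
  ∏ i, c i ^ a i / (a i).factorial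

theorem summable_norm_expCoeff {ι : Type*} [Fintype ι] (c : ι → ℂ) :
    Summable fun a => ‖expCoeff c a‖ :=
  (summable_norm_prod_and_tsum_prod_eq_prod_tsum _ fun i =>
    NormedSpace.norm_expSeries_div_summable (c i)).1

theorem exp_sum_mul_fourierMode {ι : Type*} [Fintype ι] (c : ι → ℂ) (m : ι → ℤ) (x : ℝ) :
    exp (∑ i, c i * fourierMode (m i) x) =
      ∑' a : ι → ℕ, expCoeff c a * fourierMode (∑ i, m i * a i) x := by
  let f : ι → ℕ → ℂ := fun i n => c i ^ n / n.factorial * fourierMode (m i * n) x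
  have hf : ∀ i, Summable fun n => ‖f i n‖ := fun i => by
    simpa [f, norm_fourierMode] using NormedSpace.norm_expSeries_div_summable (c i)
  have hexp : ∀ i, exp (c i * fourierMode (m i) x) = ∑' n, f i n := fun i => by
    rw [exp_eq_exp_ℂ, NormedSpace.exp_eq_tsum_div]
    refine tsum_congr fun n => ?_
    rw [mul_pow, fourierMode_pow]
    ring
  rw [exp_sum, Finset.prod_congr rfl fun i _ => hexp i,
    ← (summable_norm_prod_and_tsum_prod_eq_prod_tsum f hf).2]
  refine tsum_congr fun a => ?_
  rw [Finset.prod_mul_distrib, prod_fourierMode, expCoeff]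

def trigFreq {N : ℕ} : Fin N ⊕ Fin N → ℤ := Sum.elim (fun k => k + 1) (fun k => -(k + 1))

theorem trigFreq_ne_zero {N : ℕ} (i : Fin N ⊕ Fin N) : trigFreq i ≠ 0 := by
  rcases i with k | k <;> simp only [trigFreq, Sum.elim_inl, Sum.elim_inr] <;> omega

theorem trigFreq_add_eq_zero_iff {N : ℕ} (i j : Fin N ⊕ Fin N) :
    trigFreq i + trigFreq j = 0 ↔ j = i.swap := by
  rcases i with k | k <;> rcases j with l | l <;>
    simp only [trigFreq, Sum.elim_inl, Sum.elim_inr, Sum.swap_inl, Sum.swap_inr, reduceCtorEq,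
      Sum.inl.injEq, Sum.inr.injEq, iff_false, Fin.ext_iff] <;> omega

theorem trigPoly_eq_sum_mul_fourierMode (N : ℕ) (p q : Fin N → ℂ) (x : ℝ) :
    trigPoly N p q x = ∑ i, Sum.elim p q i * fourierMode (trigFreq i) x := by
  rw [trigPoly, Fintype.sum_sum_type, ← Finset.sum_add_distrib]
  refine Finset.sum_congr rfl fun k _ => ?_
  simp only [Sum.elim_inl, Sum.elim_inr, trigFreq, fourierMode]
  push_cast
  ring_nf

@[fun_prop]
theorem continuous_trigPoly (N : ℕ) (p q : Fin N → ℂ) : Continuous (trigPoly N p q) := by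
  unfold trigPoly
  fun_prop

theorem integral_const_add_trigPoly_sq (N : ℕ) (t : ℂ) (p q : Fin N → ℂ) :
    ∫ x in (0 : ℝ)..2 * Real.pi, (t + trigPoly N p q x) ^ 2 / 2 =
      2 * Real.pi * (t ^ 2 / 2 + ∑ k, p k * q k) := by
  simp only [trigPoly_eq_sum_mul_fourierMode]
  rw [intervalIntegral.integral_div, integral_const_add_sum_mul_fourierMode_sq t _ trigFreq_ne_zero]
  simp only [trigFreq_add_eq_zero_iff, Finset.sum_ite_eq', Finset.mem_univ, if_true,
    Fintype.sum_sum_type, Sum.elim_inl, Sum.swap_inl, Sum.elim_inr, Sum.swap_inr, mul_comm (q _)]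
  ring

theorem multiTerm_sumArrowEquivProdArrow (N : ℕ) (p q : Fin N → ℂ) (L : ℤ)
    (a : Fin N ⊕ Fin N → ℕ) :
    multiTerm N p q L (Equiv.sumArrowEquivProdArrow _ _ _ a) =
      if ∑ i, trigFreq i * a i = L then expCoeff (Sum.elim p q) a else 0 := by
  simp only [multiTerm, expCoeff, Fintype.sum_sum_type, Fintype.prod_sum_type, trigFreq,
    Sum.elim_inl, Sum.elim_inr, Equiv.sumArrowEquivProdArrow_apply_fst,
    Equiv.sumArrowEquivProdArrow_apply_snd, neg_mul, Finset.sum_neg_distrib, ← sub_eq_add_neg]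
  -- the two sides differ only in instance terms (`Decidable` and `Sub` on `ℤ`)
  rfl

theorem summable_multiTerm (N : ℕ) (p q : Fin N → ℂ) (L : ℤ) : Summable (multiTerm N p q L) := by
  rw [← (Equiv.sumArrowEquivProdArrow _ _ _).summable_iff]
  refine (summable_norm_expCoeff (Sum.elim p q)).of_norm_bounded fun a => ?_
  rw [Function.comp_apply, multiTerm_sumArrowEquivProdArrow]
  split_ifs <;> simp

theorem integral_exp_trigPoly_mul_fourierMode (N : ℕ) (p q : Fin N → ℂ) (L : ℤ) :
    ∫ x in (0 : ℝ)..2 * Real.pi, exp (trigPoly N p q x) * fourierMode (-L) x =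
      2 * Real.pi * ∑' ab, multiTerm N p q L ab := by
  have hexpand : ∀ x, exp (trigPoly N p q x) * fourierMode (-L) x =
      ∑' a, expCoeff (Sum.elim p q) a * fourierMode ((∑ i, trigFreq i * a i) + -L) x := fun x => by
    simp only [trigPoly_eq_sum_mul_fourierMode, exp_sum_mul_fourierMode, ← tsum_mul_right,
      mul_assoc, fourierMode_add]
  simp only [hexpand, integral_tsum_mul_fourierMode (summable_norm_expCoeff _), add_neg_eq_zero,
    ← multiTerm_sumArrowEquivProdArrow, Equiv.tsum_eq]

theorem prequantization_sphere_hamiltonian_general (N : ℕ) (t₀ : ℂ) (p0 q0 p2 q2 : Fin N → ℂ)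
    (l : ℕ) :
    Summable (multiTerm N p2 q2 (l : ℤ)) ∧
      (1 / (2 * (Real.pi : ℂ))) *
          ∫ x in (0 : ℝ)..(2 * Real.pi),
            ((t₀ + trigPoly N p0 q0 x) ^ 2 / 2 +
              Complex.exp (trigPoly N p2 q2 x) *
                Complex.exp (-(Complex.I * (l : ℂ) * (x : ℂ)))) =
        t₀ ^ 2 / 2 + (∑ k : Fin N, p0 k * q0 k) +
          ∑' ab : (Fin N → ℕ) × (Fin N → ℕ), multiTerm N p2 q2 (l : ℤ) ab := by
  refine ⟨summable_multiTerm N p2 q2 l, ?_⟩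
  have hmode : ∀ x : ℝ, exp (-(I * (l : ℂ) * (x : ℂ))) = fourierMode (-l) x := fun x => by
    simp [fourierMode]
  simp only [hmode]
  rw [intervalIntegral.integral_add (Continuous.intervalIntegrable (by fun_prop) _ _)
      (Continuous.intervalIntegrable (by fun_prop) _ _),
    integral_const_add_trigPoly_sq, integral_exp_trigPoly_mul_fourierMode]
  have hπ : (Real.pi : ℂ) ≠ 0 := ofReal_ne_zero.mpr Real.pi_ne_zero
  field_simp

/-- The integral computation behind the rational SFT Hamiltonian of `S³` and of the Lens
spaces `L(l,1)` (prequantizations of `S²`):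
`(1/2π)∫₀^{2π}[(t₀+u₀)²/2 + e^{u₂} e^{-ilx}]dx = t₀²/2 + ∑ p⁰_k q⁰_k + (multi-index sum)`. -/
theorem prequantization_sphere_hamiltonian (N : ℕ) (t₀ : ℂ) (p0 q0 p2 q2 : Fin N → ℂ)
    (l : ℕ) (hl : 1 ≤ l) :
    Summable (multiTerm N p2 q2 (l : ℤ)) ∧
      (1 / (2 * (Real.pi : ℂ))) *
          ∫ x in (0 : ℝ)..(2 * Real.pi),
            ((t₀ + trigPoly N p0 q0 x) ^ 2 / 2 +
              Complex.exp (trigPoly N p2 q2 x) *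
                Complex.exp (-(Complex.I * (l : ℂ) * (x : ℂ)))) =
        t₀ ^ 2 / 2 + (∑ k : Fin N, p0 k * q0 k) +
          ∑' ab : (Fin N → ℕ) × (Fin N → ℕ), multiTerm N p2 q2 (l : ℤ) ab :=
  prequantization_sphere_hamiltonian_general N t₀ p0 q0 p2 q2 l
end

section
/- Let f : ℝ × ℝ × ℝ → ℝ be a continuously differentiable function of the variables (t₀, t₂, p) satisfying the linear first-order PDE ∂f/∂t₂(t₀, t₂, p) = t₀²/2 + p · ∂f/∂p(t₀, t₂, p) for all (t₀, t₂, p), together with the initial condition f(t₀, 0, p) = p for all t₀, p. Then f(t₀, t₂, p) = t₂·t₀²/2 + e^{t₂}·p for all (t₀, t₂, p). -/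
/-!
Method of characteristics: along the characteristic curve `s ↦ (t₀, s, p e^{t₂ - s})`, which
passes through `(t₀, t₂, p)` and meets `t₂ = 0` at `p e^{t₂}`, the transport term `p ∂f/∂p`
cancels in the chain rule, so `f` grows there at the constant rate `t₀²/2`.
-/

open Real

section PartialDerivatives

variable {E F : Type*} [NormedAddCommGroup E] [NormedSpace ℝ E]
  [NormedAddCommGroup F] [NormedSpace ℝ F] {f : E × ℝ × ℝ → F} {L : E × ℝ × ℝ →L[ℝ] F}

theorem HasFDerivAt.hasDerivAt_partial₂ {a : E} {b c : ℝ} (hf : HasFDerivAt f L (a, b, c)) :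
    HasDerivAt (fun u => f (a, u, c)) (L (0, 1, 0)) b :=
  hf.comp_hasDerivAt b <|
    (hasDerivAt_const b a).prodMk ((hasDerivAt_id b).prodMk (hasDerivAt_const b c))

theorem HasFDerivAt.hasDerivAt_partial₃ {a : E} {b c : ℝ} (hf : HasFDerivAt f L (a, b, c)) :
    HasDerivAt (fun u => f (a, b, u)) (L (0, 0, 1)) c :=
  hf.comp_hasDerivAt c <|
    (hasDerivAt_const c a).prodMk ((hasDerivAt_const c b).prodMk (hasDerivAt_id c))

theorem hasDerivAt_comp_mk_partial (hf : Differentiable ℝ f) (a : E) {q : ℝ → ℝ} {q' s : ℝ}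
    (hq : HasDerivAt q q' s) :
    HasDerivAt (fun u => f (a, u, q u))
      (deriv (fun u => f (a, u, q s)) s + q' • deriv (fun u => f (a, s, u)) (q s)) s := by
  have hL := (hf (a, s, q s)).hasFDerivAt
  have hcurve := hL.comp_hasDerivAt s
    ((hasDerivAt_const s a).prodMk ((hasDerivAt_id s).prodMk hq))
  have hsplit : ((0 : E), (1 : ℝ), q') = (0, 1, 0) + q' • (0, 0, 1) := by simp
  rwa [hL.hasDerivAt_partial₂.deriv, hL.hasDerivAt_partial₃.deriv, ← map_smul, ← map_add,
    ← hsplit]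

end PartialDerivatives

theorem eq_add_mul_of_hasDerivAt_const {g : ℝ → ℝ} {c : ℝ} (hg : ∀ s, HasDerivAt g c s)
    (x : ℝ) : g x = g 0 + x * c := by
  have hd : ∀ s, HasDerivAt (fun s => g s - s * c) 0 s := fun s =>
    ((hg s).sub ((hasDerivAt_id' s).mul_const c)).congr_deriv (by ring)
  have hconst := is_const_of_deriv_eq_zero (fun s => (hd s).differentiableAt)
    (fun s => (hd s).deriv) x 0
  simp only [zero_mul, sub_zero] at hconst
  linarith

/-- Uniqueness for the `n = 1` case of the ℂPⁿ recursion: a `C¹` function `f(t₀, t₂, p)`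
satisfying `∂f/∂t₂ = t₀²/2 + p ∂f/∂p` with initial condition `f(t₀, 0, p) = p` is
`f(t₀, t₂, p) = t₂ t₀²/2 + e^{t₂} p`. -/
theorem gw_potential_of_C_pde (f : ℝ × ℝ × ℝ → ℝ)
    (hf : ContDiff ℝ 1 f)
    (hpde : ∀ t₀ t₂ p : ℝ,
      deriv (fun s => f (t₀, s, p)) t₂ =
        t₀ ^ 2 / 2 + p * deriv (fun s => f (t₀, t₂, s)) p)
    (hinit : ∀ t₀ p : ℝ, f (t₀, 0, p) = p) :
    ∀ t₀ t₂ p : ℝ, f (t₀, t₂, p) = t₂ * t₀ ^ 2 / 2 + Real.exp t₂ * p := by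
  intro t₀ t₂ p
  set q : ℝ → ℝ := fun s => p * exp t₂ * exp (-s) with hq_def
  have hq : ∀ s, HasDerivAt q (-q s) s := fun s => by
    simpa using ((hasDerivAt_neg s).exp).const_mul (p * exp t₂)
  have hchar : ∀ s, HasDerivAt (fun s => f (t₀, s, q s)) (t₀ ^ 2 / 2) s := fun s => by
    refine (hasDerivAt_comp_mk_partial (hf.differentiable one_ne_zero) t₀ (hq s)).congr_deriv ?_
    rw [hpde, smul_eq_mul]
    ring
  have hq₀ : q 0 = p * exp t₂ := by simp [hq_def]
  have hq₂ : q t₂ = p := by simp [hq_def, mul_assoc, ← exp_add]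
  have haffine := eq_add_mul_of_hasDerivAt_const hchar t₂
  simp only [hq₀, hq₂, hinit] at haffine
  rw [haffine]
  ring
end
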